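/- Let n ≥ 1, r ≥ 1, and N = n·r. The classical N×N OXC Q(N,w) contains N² inter-stage fibers (one per pair in Fin N × Fin N), while the modular OXC Q̂(n×r,w) contains |(Fin n × Fin r) × Fin n| + |(Fin n × Fin n) × Fin r| = 2·N·n inter-stage fibers; moreover r·(2·N·n) = 2·N², so the modular OXC uses a fraction 2/r of the classical fiber count, and if r ≥ 2 then 2·N·n ≤ N². -/
import Mathlib

/-- Cabling complexity (Section IV-C): with `N = n·r`, the classical OXC `Q(N,w)` has
`N²` inter-stage fibers, while the modular OXC `Q̂(n×r,w)` has
`|(Fin n × Fin r) × Fin n| + |(Fin n × Fin n) × Fin r| = 2·N·n` inter-stage fibers;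
moreover `r·(2·N·n) = 2·N²` (a fraction `2/r` of the classical count), and if `r ≥ 2`
then `2·N·n ≤ N²`. -/
theorem modular_oxc_cabling_complexity (n r : ℕ) (hn : 1 ≤ n) (hr : 1 ≤ r) :
    Fintype.card (Fin (n * r) × Fin (n * r)) = (n * r) ^ 2 ∧
    Fintype.card ((Fin n × Fin r) × Fin n) + Fintype.card ((Fin n × Fin n) × Fin r)
      = 2 * (n * r) * n ∧
    r * (2 * (n * r) * n) = 2 * (n * r) ^ 2 ∧
    (2 ≤ r → 2 * (n * r) * n ≤ (n * r) ^ 2) := by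
  refine ⟨by simp [sq], by simp; ring, by ring, fun h => ?_⟩
  have : 2 * n ≤ r * n := Nat.mul_le_mul_right n h
  calc 2 * (n * r) * n = (2 * n) * (n * r) := by ring
    _ ≤ (r * n) * (n * r) := Nat.mul_le_mul_right _ this
    _ = (n * r) ^ 2 := by ring
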